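/- arXiv:1811.04338 — 3 statements merged into one kernel-verified Lean document; each statement's English description precedes it below -/
import Mathlib

section
/- For every integer k ≥ 1, with α_k = arcsin(1/(2(2k+1)^2)), one has (2k+1)·tan α_k < 1/(4k+1). -/
/-!
Put `c = 2k + 1` and `x = 1 / (2c²)`. Since `tan (arcsin x) = x / √(1 - x²)` and `c x = 1 / (2c)`,
the claim `c tan α < 1 / (2c - 1)` reduces to `1 - 1 / (2c) < √(1 - x²)`, which after squaring and
clearing denominators is `c² + 1 < 4c³`, true for every `c ≥ 1`.
-/

open Real

lemma one_sub_one_div_two_mul_lt_sqrt {c : ℝ} (hc : 1 ≤ c) :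
    1 - 1 / (2 * c) < √(1 - (1 / (2 * c ^ 2)) ^ 2) := by
  have hc0 : 0 < c := by linarith
  rw [Real.lt_sqrt (by rw [sub_nonneg, div_le_one (by positivity)]; linarith), ← sub_pos]
  field_simp
  nlinarith [mul_le_mul hc hc zero_le_one hc0.le]

theorem mul_tan_arcsin_one_div_two_mul_sq_lt {c : ℝ} (hc : 1 ≤ c) :
    c * tan (arcsin (1 / (2 * c ^ 2))) < 1 / (2 * c - 1) := by
  have hc0 : 0 < c := by linarith
  have hs := one_sub_one_div_two_mul_lt_sqrt hc
  set s := √(1 - (1 / (2 * c ^ 2)) ^ 2)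
  have hs0 : 0 < s :=
    lt_of_le_of_lt (by rw [sub_nonneg, div_le_one (by positivity)]; linarith) hs
  have hcx : c * (1 / (2 * c ^ 2)) = 1 / (2 * c) := by field_simp
  calc c * tan (arcsin (1 / (2 * c ^ 2))) = 1 / (2 * c * s) := by
        rw [tan_arcsin, ← mul_div_assoc, hcx, div_div]
    _ < 1 / (2 * c - 1) := by
        apply one_div_lt_one_div_of_lt (by linarith)
        have := mul_lt_mul_of_pos_left hs (by positivity : (0 : ℝ) < 2 * c)
        rwa [mul_sub, mul_one, mul_one_div_cancel (by positivity)] at this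

theorem stmt_3_general (k : ℕ) (α : ℝ)
    (hα : α = Real.arcsin (1 / (2 * (2 * (k : ℝ) + 1) ^ 2))) :
    (2 * (k : ℝ) + 1) * Real.tan α < 1 / (4 * (k : ℝ) + 1) := by
  have h := mul_tan_arcsin_one_div_two_mul_sq_lt (c := 2 * (k : ℝ) + 1)
    (by linarith [k.cast_nonneg (α := ℝ)])
  rwa [← hα, show 2 * (2 * (k : ℝ) + 1) - 1 = 4 * k + 1 by ring] at h

/-- For every integer k ≥ 1, with α_k = arcsin(1/(2(2k+1)²)),
one has (2k+1)·tan α_k < 1/(4k+1). -/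
theorem stmt_3 (k : ℕ) (hk : 1 ≤ k) (α : ℝ)
    (hα : α = Real.arcsin (1 / (2 * (2 * (k : ℝ) + 1) ^ 2))) :
    (2 * (k : ℝ) + 1) * Real.tan α < 1 / (4 * (k : ℝ) + 1) :=
  stmt_3_general k α hα
end

section
/- For every integer k ≥ 1, with α_k = arcsin(1/(2(2k+1)^2)) and r_k = (√2/(4k))·(1 - (2k+1)·tan α_k), one has √2/(4k+1) < r_k < √2/(4k). -/
/-!
Positivity of `tan α_k` gives the upper bound. The lower bound is equivalent to
`(4k+1)(2k+1) tan α_k < 1`; since `tan (arcsin x) = x / √(1 - x²)` this reduces to the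
polynomial inequality `m² + 1 < 4m³` for `m = 2k + 1`.
-/

open Real

lemma tan_arcsin_pos {x : ℝ} (hx₀ : 0 < x) (hx₁ : x < 1) : 0 < tan (arcsin x) :=
  tan_pos_of_pos_of_lt_pi_div_two (arcsin_pos.mpr hx₀) (arcsin_lt_pi_div_two.mpr hx₁)

lemma mul_tan_arcsin_lt_one {x y : ℝ} (h : (y * x) ^ 2 < 1 - x ^ 2) :
    y * tan (arcsin x) < 1 := by
  have hs : 0 < √(1 - x ^ 2) := sqrt_pos.mpr (by nlinarith [sq_nonneg (y * x)])
  have hyx : y * x < √(1 - x ^ 2) :=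
    calc y * x ≤ |y * x| := le_abs_self _
      _ = √((y * x) ^ 2) := (sqrt_sq_eq_abs _).symm
      _ < √(1 - x ^ 2) := sqrt_lt_sqrt (sq_nonneg _) h
  rw [tan_arcsin, ← mul_div_assoc, div_lt_one hs]
  exact hyx

lemma sq_mul_inv_lt_one_sub_sq {K : ℝ} (hK : 0 ≤ K) :
    ((4 * K + 1) * (2 * K + 1) * (1 / (2 * (2 * K + 1) ^ 2))) ^ 2
      < 1 - (1 / (2 * (2 * K + 1) ^ 2)) ^ 2 := by
  have hm : 0 < 2 * K + 1 := by linarith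
  rw [div_pow, mul_one_div, div_pow, one_pow, ← sub_pos]
  field_simp
  nlinarith [pow_pos hm 3, sq_nonneg K, mul_nonneg hK (sq_nonneg K)]

lemma div_add_one_lt_div_mul_one_sub {c a t : ℝ} (hc : 0 < c) (ha : 0 < a)
    (ht : (a + 1) * t < 1) : c / (a + 1) < c / a * (1 - t) := by
  rw [div_mul_eq_mul_div, div_lt_div_iff₀ (by linarith) ha]
  nlinarith

/-- For every integer k ≥ 1, with α_k = arcsin(1/(2(2k+1)²)) and
r_k = (√2/(4k))(1 - (2k+1)·tan α_k), one has √2/(4k+1) < r_k < √2/(4k). -/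
theorem stmt_4 (k : ℕ) (hk : 1 ≤ k) (α r : ℝ)
    (hα : α = Real.arcsin (1 / (2 * (2 * (k : ℝ) + 1) ^ 2)))
    (hr : r = (Real.sqrt 2 / (4 * (k : ℝ))) * (1 - (2 * (k : ℝ) + 1) * Real.tan α)) :
    Real.sqrt 2 / (4 * (k : ℝ) + 1) < r ∧ r < Real.sqrt 2 / (4 * (k : ℝ)) := by
  have hK : (1 : ℝ) ≤ k := by exact_mod_cast hk
  have hx₀ : 0 < 1 / (2 * (2 * (k : ℝ) + 1) ^ 2) := by positivity
  have hx₁ : 1 / (2 * (2 * (k : ℝ) + 1) ^ 2) < 1 := by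
    rw [div_lt_one (by positivity)]; nlinarith
  have ht₀ : 0 < (2 * (k : ℝ) + 1) * tan α := by
    rw [hα]; exact mul_pos (by positivity) (tan_arcsin_pos hx₀ hx₁)
  have ht₁ : (4 * (k : ℝ) + 1) * ((2 * k + 1) * tan α) < 1 := by
    rw [← mul_assoc, hα]
    exact mul_tan_arcsin_lt_one (sq_mul_inv_lt_one_sub_sq (by linarith))
  subst hr
  exact ⟨div_add_one_lt_div_mul_one_sub (by positivity) (by positivity) ht₁,
    mul_lt_of_lt_one_right (by positivity) (by linarith)⟩
end

section
/- Let θ_1, …, θ_n ∈ ℝ with n ≤ 5 (the directions of at most five edges emanating from a common vertex). Then there exists θ ∈ ℝ such that for every i ∈ {1, …, n} and every integer m, the angular distance between θ_i and θ + m·(π/3) is strictly greater than π/37; that is, |θ_i - θ - m·(π/3) - 2π·t| > π/37 for all integers m and t. -/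
/-!
The six stars of rays θₖ = k·π/18 + ℤ·π/3, k = 0, …, 5, together cover the multiples of π/18
exactly once each. Since π/18 > 2·π/37, a direction is within π/37 of at most one multiple of
π/18, so each edge spoils at most one of the six stars, and at most five edges leave one star free.
-/

open Real

theorem Int.eq_of_abs_sub_mul_le {x δ ε : ℝ} (hε : 2 * ε < δ) {a b : ℤ}
    (ha : |x - a * δ| ≤ ε) (hb : |x - b * δ| ≤ ε) : a = b := by
  have hδ : 0 < δ := by linarith [(abs_nonneg _).trans ha]
  have hab : |((a - b : ℤ) : ℝ)| * δ < 1 * δ := by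
    calc |((a - b : ℤ) : ℝ)| * δ = |(x - b * δ) - (x - a * δ)| := by
          rw [← abs_of_pos hδ, ← abs_mul, abs_of_pos hδ]; push_cast; ring_nf
      _ ≤ |x - b * δ| + |x - a * δ| := abs_sub _ _
      _ < 1 * δ := by linarith
  have : |a - b| < 1 := by
    exact_mod_cast (lt_of_mul_lt_mul_of_nonneg_right hab hδ.le : |((a - b : ℤ) : ℝ)| < 1)
  rw [abs_lt] at this
  omega

theorem Fintype.exists_forall_not_of_card_lt {ι κ : Type*} [Fintype ι] [Fintype κ]
    (R : ι → κ → Prop) (hR : ∀ i k k', R i k → R i k' → k = k')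
    (hcard : Fintype.card ι < Fintype.card κ) : ∃ k, ∀ i, ¬ R i k := by
  by_contra! h
  choose f hf using h
  have hf_inj : Function.Injective f := fun k k' hkk' => hR _ k k' (hf k) (hkk' ▸ hf k')
  exact (Fintype.card_le_of_injective f hf_inj).not_gt hcard

def NearHexRay (θ x : ℝ) : Prop :=
  ∃ m t : ℤ, |x - θ - m * (π / 3) - 2 * π * t| ≤ π / 37

theorem NearHexRay.fin_six_unique {x : ℝ} {k k' : Fin 6}
    (hk : NearHexRay (k * (π / 18)) x) (hk' : NearHexRay (k' * (π / 18)) x) : k = k' := by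
  obtain ⟨m, t, h⟩ := hk
  obtain ⟨m', t', h'⟩ := hk'
  have hmul : ∀ (j : Fin 6) (m t : ℤ), x - j * (π / 18) - m * (π / 3) - 2 * π * t =
      x - ((j + 6 * (m + 6 * t) : ℤ) : ℝ) * (π / 18) := by
    intro j m t; push_cast; ring
  rw [hmul] at h h'
  have := Int.eq_of_abs_sub_mul_le (by linarith [pi_pos]) h h'
  omega

/-- Let θ₁, …, θₙ ∈ ℝ with n ≤ 5 be the directions of at most five edges emanating
from a common vertex.  Then there is a direction θ such that every θᵢ is at angular
distance greater than π/37 from every ray θ + m·(π/3), m ∈ ℤ. -/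
theorem stmt_7 (n : ℕ) (hn : n ≤ 5) (θs : Fin n → ℝ) :
    ∃ θ : ℝ, ∀ i : Fin n, ∀ m t : ℤ,
      |θs i - θ - (m : ℝ) * (π / 3) - 2 * π * (t : ℝ)| > π / 37 := by
  obtain ⟨k, hk⟩ := Fintype.exists_forall_not_of_card_lt
    (fun (i : Fin n) (k : Fin 6) => NearHexRay (k * (π / 18)) (θs i))
    (fun _ _ _ => NearHexRay.fin_six_unique) (by simp only [Fintype.card_fin]; omega)
  exact ⟨k * (π / 18), fun i m t => not_le.mp fun h => hk i ⟨m, t, h⟩⟩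
end
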